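/- For natural numbers n, m and indices 0 ≤ k ≤ n, 0 ≤ r ≤ m, define the operator C^{n,m}_{k,r} = Σ_{j=0}^{min(k, m−r)} ((−1)^k/(n−k)!)((−1)^{r+j}/(m−r−j)!) C(k, j) ∂_E^{n−k} ∘ M_{E^{−k}} ∘ ∂_E^{m−r−j} ∘ M_{E^{−r−j}} acting on Laurent monomials in E. Then C^{n,m}_{k,r} = ((−1)^{k+r}/((n−k)!(m−r)!)) ∂_E^{n+m−k−r} ∘ M_{E^{−k−r}}, and consequently C^{n,m}_{k,r} = C^{m,n}_{r,k} as operators on Laurent polynomials in E. -/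

import Mathlib

/-- Laurent polynomials in `E`, encoded by coefficient functions `a ↦` coefficient
of `E^a`. -/
abbrev ESpace : Type := ℤ → ℚ

/-- `∂_E`: on monomials, `∂_E E^a = a E^{a−1}`. -/
def dE (f : ESpace) : ESpace := fun a => ((a : ℚ) + 1) * f (a + 1)

/-- Multiplication by `E^p` (`p ∈ ℤ`). -/
def mE (p : ℤ) (f : ESpace) : ESpace := fun a => f (a - p)

/-- The operator `C^{n,m}_{k,r}` from the abelian commutator computation. -/
noncomputable def Cop (n m k r : ℕ) (f : ESpace) : ESpace :=
  ∑ j ∈ Finset.range (min k (m - r) + 1),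
    (((-1 : ℚ) ^ k / (Nat.factorial (n - k))) *
        ((-1 : ℚ) ^ (r + j) / (Nat.factorial (m - r - j))) * (Nat.choose k j)) •
      dE^[n - k] (mE (-(k : ℤ)) (dE^[m - r - j] (mE (-((r : ℤ) + j)) f)))

/-! On coefficients, `∂_E^q` multiplies the coefficient of `E^a` by the rising factorial
`(a+1)(a+2)⋯(a+q)`, and every summand of `C^{n,m}_{k,r}` reads off the same coefficient of `f`.
What remains is a scalar identity between rising factorials `y^{(q)}`:
`∑_j (-1)^j C(k,j) B!/(B-j)! y^{(B-j)} = (y-k)^{(B)}`. It is the Chu–Vandermonde identity for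
rising factorials at `-k` and `y`, because `(-k)^{(j)} = (-1)^j k!/(k-j)!`. The closed form is
visibly symmetric under `(n,k) ↔ (m,r)`. -/

open Finset Polynomial

theorem ascPochhammer_eval_add {R : Type*} [CommSemiring R] (x y : R) (n : ℕ) :
    (ascPochhammer R n).eval (x + y) = ∑ ij ∈ antidiagonal n,
      (n.choose ij.1 : R) * ((ascPochhammer R ij.1).eval x * (ascPochhammer R ij.2).eval y) := by
  induction n with
  | zero => simp
  | succ n ih =>
    rw [ascPochhammer_succ_eval, ih, sum_mul, sum_antidiagonal_choose_succ_mul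
      (fun i j => (ascPochhammer R i).eval x * (ascPochhammer R j).eval y), ← sum_add_distrib]
    refine sum_congr rfl fun ij hij => ?_
    obtain rfl := mem_antidiagonal.mp hij
    rw [Nat.choose_symm_add, ascPochhammer_succ_eval, ascPochhammer_succ_eval]
    push_cast
    ring

theorem sum_choose_mul_descFactorial_mul_ascPochhammer {R : Type*} [CommRing R]
    (k B : ℕ) (y : R) :
    ∑ j ∈ range (min k B + 1),
      (-1) ^ j * (k.choose j : R) * B.descFactorial j * (ascPochhammer R (B - j)).eval y =
    (ascPochhammer R B).eval (y - k) := by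
  have hvanish : ∀ j ∈ range (B + 1), j ∉ range (min k B + 1) →
      (-1) ^ j * (k.choose j : R) * B.descFactorial j * (ascPochhammer R (B - j)).eval y = 0 := by
    intro j hjB hjk
    simp only [mem_range] at hjB hjk
    rw [Nat.choose_eq_zero_of_lt (by omega)]
    simp
  rw [sum_subset (range_subset_range.mpr (by omega)) hvanish, sub_eq_neg_add,
    ascPochhammer_eval_add, Finset.Nat.sum_antidiagonal_eq_sum_range_succ_mk]
  refine sum_congr rfl fun j _ => ?_
  rw [ascPochhammer_eval_neg_eq_descPochhammer, descPochhammer_eval_eq_descFactorial,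
    Nat.descFactorial_eq_factorial_mul_choose, Nat.descFactorial_eq_factorial_mul_choose]
  push_cast
  ring

theorem sum_choose_div_factorial_mul_ascPochhammer {K : Type*} [Field K] [CharZero K]
    (k B : ℕ) (y : K) :
    ∑ j ∈ range (min k B + 1),
      (-1) ^ j * (k.choose j : K) / (B - j).factorial * (ascPochhammer K (B - j)).eval y =
    (ascPochhammer K B).eval (y - k) / B.factorial := by
  rw [← sum_choose_mul_descFactorial_mul_ascPochhammer, sum_div]
  refine sum_congr rfl fun j hj => ?_
  have hjB : j ≤ B := by simp only [mem_range] at hj; omega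
  have hdesc : (B.descFactorial j : K) ≠ 0 :=
    Nat.cast_ne_zero.mpr (Nat.descFactorial_eq_zero_iff_lt.not.mpr (by omega))
  rw [← Nat.factorial_mul_descFactorial hjB]
  push_cast
  field_simp

theorem dE_iterate_apply (q : ℕ) (f : ESpace) (a : ℤ) :
    dE^[q] f a = (ascPochhammer ℚ q).eval ((a : ℚ) + 1) * f (a + q) := by
  induction q generalizing f with
  | zero => simp
  | succ q ih =>
    rw [Function.iterate_succ_apply, ih, dE, ascPochhammer_succ_eval,
      show a + (q + 1 : ℕ) = a + q + 1 by push_cast; ring]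
    push_cast
    ring

theorem Cop_eq_smul_dE_iterate_mE (n m k r : ℕ) (hk : k ≤ n) (hr : r ≤ m) (f : ESpace) :
    Cop n m k r f =
      ((-1 : ℚ) ^ (k + r) / ((Nat.factorial (n - k)) * (Nat.factorial (m - r)))) •
        dE^[n + m - k - r] (mE (-(k : ℤ) - r) f) := by
  obtain ⟨A, rfl⟩ : ∃ A, n = A + k := ⟨n - k, by omega⟩
  obtain ⟨B, rfl⟩ : ∃ B, m = B + r := ⟨m - r, by omega⟩
  funext a
  set N : ℤ := a + A + B + k + r
  have hterm : ∀ j ∈ range (min k B + 1),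
      ((-1 : ℚ) ^ k / A.factorial * ((-1) ^ (r + j) / (B - j).factorial) * k.choose j) •
          dE^[A] (mE (-k) (dE^[B - j] (mE (-(r + j : ℤ)) f))) a =
        (-1) ^ (k + r) / A.factorial * (ascPochhammer ℚ A).eval ((a : ℚ) + 1) * f N *
          ((-1) ^ j * (k.choose j : ℚ) / (B - j).factorial *
          (ascPochhammer ℚ (B - j)).eval ((a : ℚ) + A + k + 1)) := by
    intro j hj
    have hjB : j ≤ B := by simp only [mem_range] at hj; omega
    simp only [smul_eq_mul, dE_iterate_apply, mE, sub_neg_eq_add]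
    rw [show a + A + k + (B - j : ℕ) + (r + j : ℤ) = N by omega]
    push_cast
    ring
  simp only [Cop, Finset.sum_apply, Pi.smul_apply, Nat.add_sub_cancel]
  rw [sum_congr rfl hterm, ← mul_sum, sum_choose_div_factorial_mul_ascPochhammer,
    show (a : ℚ) + A + k + 1 - k = a + 1 + A by ring, smul_eq_mul, dE_iterate_apply, mE,
    show A + k + (B + r) - k - r = A + B by omega, ← ascPochhammer_mul, eval_mul, eval_comp,
    eval_add, eval_X, eval_natCast,
    show a + (A + B : ℕ) - (-k - r : ℤ) = N by push_cast; ring]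
  ring

/-- `C^{n,m}_{k,r} = ((−1)^{k+r}/((n−k)!(m−r)!)) ∂_E^{n+m−k−r} ∘ M_{E^{−k−r}}`,
and consequently `C^{n,m}_{k,r} = C^{m,n}_{r,k}` as operators on Laurent
polynomials in `E`. -/
theorem Cop_closed_form_and_symm (n m k r : ℕ) (hk : k ≤ n) (hr : r ≤ m) :
    (∀ f : ESpace, Cop n m k r f =
      ((-1 : ℚ) ^ (k + r) / ((Nat.factorial (n - k)) * (Nat.factorial (m - r)))) •
        dE^[n + m - k - r] (mE (-(k : ℤ) - r) f)) ∧
    (∀ f : ESpace, Cop n m k r f = Cop m n r k f) := by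
  refine ⟨Cop_eq_smul_dE_iterate_mE n m k r hk hr, fun f => ?_⟩
  rw [Cop_eq_smul_dE_iterate_mE n m k r hk hr, Cop_eq_smul_dE_iterate_mE m n r k hr hk,
    add_comm r k, mul_comm ((m - r).factorial : ℚ), show m + n - r - k = n + m - k - r by omega,
    show -(r : ℤ) - k = -k - r by ring]
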